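/- arXiv:2509.12270 — 2 statements merged into one kernel-verified Lean document; each statement's English description precedes it below -/
import Mathlib

section
/- Let n be a positive integer, β ≥ 0, x > 0. Then the fourth central moment of the semi-exponential Post–Widder operator is (P_n^β ψ_x⁴)(x) = 3x⁴/n² + 2x⁴(3+βx)(1+3βx)/n³ + βx⁵(24 + βx(6+βx)²)/n⁴, where ψ_x(t) = t - x. -/
open MeasureTheory

/-- The semi-exponential Post–Widder operator
`(P_n^β f)(x) = e^{-βx}(n/x)^n Σ_{ν=0}^∞ (nβ)^ν/(ν! Γ(n+ν)) ∫_0^∞ t^{n+ν-1} e^{-nt/x} f(t) dt`. -/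
noncomputable def PW (n : ℕ) (β x : ℝ) (f : ℝ → ℝ) : ℝ :=
  Real.exp (-(β * x)) * ((n : ℝ) / x) ^ n *
    ∑' ν : ℕ, ((n : ℝ) * β) ^ ν / (ν.factorial * Real.Gamma ((n : ℝ) + ν)) *
      ∫ t in Set.Ioi (0 : ℝ), t ^ (n + ν - 1) * Real.exp (-((n : ℝ) * t) / x) * f t

open Set

lemma intOn (p : ℕ) {r : ℝ} (hr : 0 < r) :
    IntegrableOn (fun t : ℝ => t ^ p * Real.exp (-(r * t))) (Ioi 0) := by
  have h := integrableOn_rpow_mul_exp_neg_mul_rpow (p := 1) (s := (p : ℝ)) (b := r)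
    (by linarith [Nat.cast_nonneg (α:=ℝ) p]) zero_lt_one hr
  refine h.congr_fun (fun t ht => ?_) measurableSet_Ioi
  beta_reduce
  rw [Real.rpow_one, Real.rpow_natCast, neg_mul]

lemma intVal (p : ℕ) {r : ℝ} (hr : 0 < r) :
    ∫ t in Ioi (0:ℝ), t ^ p * Real.exp (-(r * t)) = (p.factorial : ℝ) / r ^ (p + 1) := by
  have h := Real.integral_rpow_mul_exp_neg_mul_Ioi (a := (p : ℝ) + 1) (r := r) (by positivity) hr
  rw [show (∫ t in Ioi (0:ℝ), t ^ ((p : ℝ) + 1 - 1) * Real.exp (-(r * t)))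
      = ∫ t in Ioi (0:ℝ), t ^ p * Real.exp (-(r * t)) from ?_] at h
  · rw [h, Real.Gamma_nat_eq_factorial,
      show ((p:ℝ)+1) = ((p+1 : ℕ):ℝ) by push_cast; ring,
      Real.rpow_natCast, div_pow, one_pow, one_div, inv_mul_eq_div]
  · refine setIntegral_congr_fun measurableSet_Ioi (fun t ht => ?_)
    rw [add_sub_cancel_right, Real.rpow_natCast]

lemma intFull (q : ℕ) {r : ℝ} (hr : 0 < r) (x : ℝ) :
    ∫ t in Ioi (0:ℝ), t ^ q * Real.exp (-(r * t)) * (t - x) ^ 4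
      = x^4 * (q.factorial : ℝ) / r^(q+1) - 4*x^3 * ((q+1).factorial : ℝ) / r^(q+2)
        + 6*x^2 * ((q+2).factorial : ℝ) / r^(q+3) - 4*x * ((q+3).factorial : ℝ) / r^(q+4)
        + ((q+4).factorial : ℝ) / r^(q+5) := by
  have e : ∀ t : ℝ, t ^ q * Real.exp (-(r * t)) * (t - x) ^ 4
      = x^4 * (t ^ q * Real.exp (-(r * t))) + (-(4*x^3)) * (t ^ (q+1) * Real.exp (-(r * t)))
        + (6*x^2) * (t ^ (q+2) * Real.exp (-(r * t))) + (-(4*x)) * (t ^ (q+3) * Real.exp (-(r * t)))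
        + (t ^ (q+4) * Real.exp (-(r * t))) := by
    intro t; ring
  simp only [e]
  have I0 : Integrable (fun t : ℝ => x^4 * (t ^ q * Real.exp (-(r * t))))
      (volume.restrict (Ioi 0)) := (intOn q hr).const_mul _
  have I1 : Integrable (fun t : ℝ => -(4*x^3) * (t ^ (q+1) * Real.exp (-(r * t))))
      (volume.restrict (Ioi 0)) := (intOn (q+1) hr).const_mul _
  have I2 : Integrable (fun t : ℝ => 6*x^2 * (t ^ (q+2) * Real.exp (-(r * t))))
      (volume.restrict (Ioi 0)) := (intOn (q+2) hr).const_mul _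
  have I3 : Integrable (fun t : ℝ => -(4*x) * (t ^ (q+3) * Real.exp (-(r * t))))
      (volume.restrict (Ioi 0)) := (intOn (q+3) hr).const_mul _
  have I4 : Integrable (fun t : ℝ => t ^ (q+4) * Real.exp (-(r * t)))
      (volume.restrict (Ioi 0)) := intOn (q+4) hr
  have I01 : Integrable (fun t : ℝ => x^4 * (t ^ q * Real.exp (-(r * t)))
      + -(4*x^3) * (t ^ (q+1) * Real.exp (-(r * t)))) (volume.restrict (Ioi 0)) := I0.add I1
  have I012 : Integrable (fun t : ℝ => (x^4 * (t ^ q * Real.exp (-(r * t)))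
      + -(4*x^3) * (t ^ (q+1) * Real.exp (-(r * t))))
      + 6*x^2 * (t ^ (q+2) * Real.exp (-(r * t)))) (volume.restrict (Ioi 0)) := I01.add I2
  have I0123 : Integrable (fun t : ℝ => ((x^4 * (t ^ q * Real.exp (-(r * t)))
      + -(4*x^3) * (t ^ (q+1) * Real.exp (-(r * t))))
      + 6*x^2 * (t ^ (q+2) * Real.exp (-(r * t))))
      + -(4*x) * (t ^ (q+3) * Real.exp (-(r * t)))) (volume.restrict (Ioi 0)) := I012.add I3
  rw [integral_add I0123 I4, integral_add I012 I3, integral_add I01 I2, integral_add I0 I1,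
    integral_const_mul, integral_const_mul, integral_const_mul, integral_const_mul,
    intVal q hr, intVal (q+1) hr, intVal (q+2) hr, intVal (q+3) hr, intVal (q+4) hr]
  ring

lemma factAux (j ν : ℕ) :
    (ν.factorial : ℝ) * ∏ i ∈ Finset.range j, ((ν : ℝ) + j - i) = ((ν + j).factorial : ℝ) := by
  induction j with
  | zero => simp
  | succ j ih =>
    have h1 : ∀ i ∈ Finset.range (j+1), ((ν : ℝ) + ↑(j+1) - ↑i) = ((ν : ℝ) + ↑j + 1 - ↑i) := by
      intro i _; push_cast; ring
    rw [Finset.prod_congr rfl h1, Finset.prod_range_succ' (fun i : ℕ => (ν : ℝ) + ↑j + 1 - ↑i)]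
    have h2 : ∀ i ∈ Finset.range j, ((ν : ℝ) + ↑j + 1 - ↑(i+1)) = ((ν : ℝ) + ↑j - ↑i) := by
      intro i _; push_cast; ring
    rw [Finset.prod_congr rfl h2]
    have h3 : (((ν + (j+1)).factorial : ℕ) : ℝ) = ((ν : ℝ) + j + 1) * ((ν + j).factorial : ℝ) := by
      rw [show ν + (j+1) = (ν + j) + 1 from rfl, Nat.factorial_succ]
      push_cast; ring
    rw [h3, ← ih]; push_cast; ring

lemma hasSum_desc (y : ℝ) (j : ℕ) :
    HasSum (fun ν : ℕ => y ^ ν / ν.factorial * ∏ i ∈ Finset.range j, ((ν : ℝ) - i))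
      (y ^ j * Real.exp y) := by
  have base : HasSum (fun ν : ℕ => y ^ ν / ν.factorial) (Real.exp y) := by
    rw [Real.exp_eq_exp_ℝ]; exact NormedSpace.expSeries_div_hasSum_exp y
  have h := base.mul_left (y ^ j)
  have hinj : Function.Injective (fun ν : ℕ => ν + j) := add_left_injective j
  have hvan : ∀ ν ∉ Set.range (fun ν : ℕ => ν + j),
      y ^ ν / ν.factorial * ∏ i ∈ Finset.range j, ((ν : ℝ) - i) = 0 := by
    intro ν hν
    have hlt : ν < j := by
      by_contra hge
      exact hν ⟨ν - j, show ν - j + j = ν by omega⟩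
    apply mul_eq_zero_of_right
    exact Finset.prod_eq_zero (Finset.mem_range.mpr hlt) (by simp)
  rw [← Function.Injective.hasSum_iff hinj hvan]
  have : ((fun ν : ℕ => y ^ ν / ν.factorial * ∏ i ∈ Finset.range j, ((ν : ℝ) - i))
      ∘ (fun ν : ℕ => ν + j)) = fun ν : ℕ => y ^ j * (y ^ ν / ν.factorial) := by
    funext ν
    simp only [Function.comp_apply]
    have hf := factAux j ν
    have hprod : ∀ i ∈ Finset.range j, (((ν + j : ℕ) : ℝ) - i) = ((ν : ℝ) + j - i) := by
      intro i _; push_cast; ring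
    rw [Finset.prod_congr rfl hprod]
    have hν : (ν.factorial : ℝ) ≠ 0 := Nat.cast_ne_zero.mpr ν.factorial_ne_zero
    have hνj : (((ν + j).factorial : ℕ) : ℝ) ≠ 0 := Nat.cast_ne_zero.mpr (ν + j).factorial_ne_zero
    have hP : (∏ i ∈ Finset.range j, ((ν : ℝ) + ↑j - ↑i))
        = ((ν + j).factorial : ℝ) / (ν.factorial : ℝ) := by
      rw [eq_div_iff hν]; linarith [hf]
    rw [hP, pow_add]
    field_simp
  rw [this]
  exact h

lemma intFull' (q : ℕ) {r : ℝ} (hr : 0 < r) (x : ℝ) :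
    ∫ t in Ioi (0:ℝ), t ^ q * Real.exp (-(r * t)) * (t - x) ^ 4
      = (q.factorial : ℝ) / r ^ (q+5) *
        ((x*r)^4 - 4*(x*r)^3*((q:ℝ)+1) + 6*(x*r)^2*((q:ℝ)+1)*((q:ℝ)+2)
          - 4*(x*r)*((q:ℝ)+1)*((q:ℝ)+2)*((q:ℝ)+3) + ((q:ℝ)+1)*((q:ℝ)+2)*((q:ℝ)+3)*((q:ℝ)+4)) := by
  have hr0 : r ≠ 0 := hr.ne'
  rw [intFull q hr x]
  have hf1 : (((q+1).factorial : ℕ) : ℝ) = ((q:ℝ)+1) * (q.factorial : ℝ) := by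
    rw [Nat.factorial_succ]; push_cast; ring
  have hf2 : (((q+2).factorial : ℕ) : ℝ) = ((q:ℝ)+2) * ((q+1).factorial : ℝ) := by
    rw [show q+2 = (q+1)+1 from rfl, Nat.factorial_succ]; push_cast; ring
  have hf3 : (((q+3).factorial : ℕ) : ℝ) = ((q:ℝ)+3) * ((q+2).factorial : ℝ) := by
    rw [show q+3 = (q+2)+1 from rfl, Nat.factorial_succ]; push_cast; ring
  have hf4 : (((q+4).factorial : ℕ) : ℝ) = ((q:ℝ)+4) * ((q+3).factorial : ℝ) := by
    rw [show q+4 = (q+3)+1 from rfl, Nat.factorial_succ]; push_cast; ring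
  rw [hf4, hf3, hf2, hf1]
  have hp : ∀ k : ℕ, r ^ (q+k) = r ^ q * r ^ k := fun k => pow_add r q k
  rw [hp 1, hp 2, hp 3, hp 4, hp 5]
  have hq0 : r ^ q ≠ 0 := pow_ne_zero _ hr0
  field_simp


set_option maxHeartbeats 1000000 in
theorem stmt15 (n : ℕ) (hn : 1 ≤ n) (β x : ℝ) (hβ : 0 ≤ β) (hx : 0 < x) :
    PW n β x (fun t => (t - x) ^ 4) = 3 * x ^ 4 / (n : ℝ) ^ 2 + 2 * x ^ 4 * (3 + β * x) * (1 + 3 * β * x) / (n : ℝ) ^ 3 + β * x ^ 5 * (24 + β * x * (6 + β * x) ^ 2) / (n : ℝ) ^ 4 := by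
  obtain ⟨q, rfl⟩ : ∃ q, n = q + 1 := ⟨n - 1, by omega⟩
  have hx0 : x ≠ 0 := hx.ne'
  have hN0 : ((q:ℝ)+1) ≠ 0 := by positivity
  have hr : (0:ℝ) < ((q:ℝ)+1) / x := by positivity
  have H : HasSum (fun ν : ℕ =>
      ((x/((q:ℝ)+1))^(q+1) * (x^4/((q:ℝ)+1)^4)) *
      ((3*((q:ℝ)+1)^2+6*((q:ℝ)+1)) * ((β*x)^ν/ν.factorial * ∏ i ∈ Finset.range 0, ((ν:ℝ) - i))
      + (20*((q:ℝ)+1)+24) * ((β*x)^ν/ν.factorial * ∏ i ∈ Finset.range 1, ((ν:ℝ) - i))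
      + (6*((q:ℝ)+1)+36) * ((β*x)^ν/ν.factorial * ∏ i ∈ Finset.range 2, ((ν:ℝ) - i))
      + 12 * ((β*x)^ν/ν.factorial * ∏ i ∈ Finset.range 3, ((ν:ℝ) - i))
      + ((β*x)^ν/ν.factorial * ∏ i ∈ Finset.range 4, ((ν:ℝ) - i))))
      (((x/((q:ℝ)+1))^(q+1) * (x^4/((q:ℝ)+1)^4)) *
      ((3*((q:ℝ)+1)^2+6*((q:ℝ)+1)) * ((β*x)^0 * Real.exp (β*x))
      + (20*((q:ℝ)+1)+24) * ((β*x)^1 * Real.exp (β*x))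
      + (6*((q:ℝ)+1)+36) * ((β*x)^2 * Real.exp (β*x))
      + 12 * ((β*x)^3 * Real.exp (β*x))
      + ((β*x)^4 * Real.exp (β*x)))) :=
    ((((((hasSum_desc (β*x) 0).mul_left _).add
      ((hasSum_desc (β*x) 1).mul_left _)).add
      ((hasSum_desc (β*x) 2).mul_left _)).add
      ((hasSum_desc (β*x) 3).mul_left 12)).add (hasSum_desc (β*x) 4)).mul_left _
  have key : ∀ ν : ℕ,
      (((q+1 : ℕ) : ℝ) * β) ^ ν / (ν.factorial * Real.Gamma (((q+1 : ℕ) : ℝ) + ν)) *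
        ∫ t in Set.Ioi (0:ℝ), t ^ ((q+1) + ν - 1) * Real.exp (-(((q+1 : ℕ) : ℝ) * t) / x) * (t - x)^4
      = ((x/((q:ℝ)+1))^(q+1) * (x^4/((q:ℝ)+1)^4)) *
      ((3*((q:ℝ)+1)^2+6*((q:ℝ)+1)) * ((β*x)^ν/ν.factorial * ∏ i ∈ Finset.range 0, ((ν:ℝ) - i))
      + (20*((q:ℝ)+1)+24) * ((β*x)^ν/ν.factorial * ∏ i ∈ Finset.range 1, ((ν:ℝ) - i))
      + (6*((q:ℝ)+1)+36) * ((β*x)^ν/ν.factorial * ∏ i ∈ Finset.range 2, ((ν:ℝ) - i))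
      + 12 * ((β*x)^ν/ν.factorial * ∏ i ∈ Finset.range 3, ((ν:ℝ) - i))
      + ((β*x)^ν/ν.factorial * ∏ i ∈ Finset.range 4, ((ν:ℝ) - i))) := by
    intro ν
    have hG : Real.Gamma (((q+1 : ℕ) : ℝ) + ν) = ((q+ν).factorial : ℝ) := by
      rw [show (((q+1 : ℕ)) : ℝ) + ν = ((q+ν : ℕ) : ℝ) + 1 by push_cast; ring,
        Real.Gamma_nat_eq_factorial]
    have hexp : ∀ t : ℝ, -(((q+1 : ℕ) : ℝ) * t) / x = -(((((q:ℝ)+1))/x) * t) := by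
      intro t; push_cast; ring
    rw [hG, show (q+1) + ν - 1 = q + ν from by omega]
    simp only [hexp]
    rw [intFull' (q+ν) hr x,
      show x*((((q:ℝ)+1))/x) = ((q:ℝ)+1) from by field_simp]
    have hfq : ((q+ν).factorial : ℝ) ≠ 0 := Nat.cast_ne_zero.mpr (q+ν).factorial_ne_zero
    have hfν : ((ν.factorial : ℕ) : ℝ) ≠ 0 := Nat.cast_ne_zero.mpr ν.factorial_ne_zero
    have hsc : (((q+1 : ℕ) : ℝ) * β) ^ ν / ((ν.factorial : ℝ) * ((q+ν).factorial : ℝ)) *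
        (((q+ν).factorial : ℝ) / ((((q:ℝ)+1))/x) ^ ((q+ν)+5))
        = ((x/((q:ℝ)+1))^(q+1) * (x^4/((q:ℝ)+1)^4)) * ((β*x)^ν/(ν.factorial : ℝ)) := by
      rw [show (q+ν)+5 = ((q+1)+ν)+4 from by omega, pow_add, pow_add]
      have h1 : ((((q:ℝ)+1))/x) ^ (q+1) ≠ 0 := pow_ne_zero _ (by positivity)
      have h2 : ((((q:ℝ)+1))/x) ^ ν ≠ 0 := pow_ne_zero _ (by positivity)
      push_cast
      rw [mul_pow, div_pow, div_pow, div_pow, mul_pow]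
      have hxq : x ^ (q+1) ≠ 0 := pow_ne_zero _ hx0
      have hxν : x ^ ν ≠ 0 := pow_ne_zero _ hx0
      have hNq : ((q:ℝ)+1) ^ (q+1) ≠ 0 := pow_ne_zero _ hN0
      have hNν : ((q:ℝ)+1) ^ ν ≠ 0 := pow_ne_zero _ hN0
      have hN0' : (1 + (q:ℝ)) ≠ 0 := by positivity
      field_simp
      ring_nf
      simp only [inv_pow]
      field_simp
      ring
    calc (((q+1 : ℕ) : ℝ) * β) ^ ν / ((ν.factorial : ℝ) * ((q+ν).factorial : ℝ)) *
        (((q+ν).factorial : ℝ) / ((((q:ℝ)+1))/x) ^ ((q+ν)+5) *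
          (((q:ℝ)+1)^4 - 4*((q:ℝ)+1)^3*(((q+ν:ℕ):ℝ)+1)
            + 6*((q:ℝ)+1)^2*(((q+ν:ℕ):ℝ)+1)*(((q+ν:ℕ):ℝ)+2)
            - 4*((q:ℝ)+1)*(((q+ν:ℕ):ℝ)+1)*(((q+ν:ℕ):ℝ)+2)*(((q+ν:ℕ):ℝ)+3)
            + (((q+ν:ℕ):ℝ)+1)*(((q+ν:ℕ):ℝ)+2)*(((q+ν:ℕ):ℝ)+3)*(((q+ν:ℕ):ℝ)+4)))
        = ((((q+1 : ℕ) : ℝ) * β) ^ ν / ((ν.factorial : ℝ) * ((q+ν).factorial : ℝ)) *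
            (((q+ν).factorial : ℝ) / ((((q:ℝ)+1))/x) ^ ((q+ν)+5))) *
          (((q:ℝ)+1)^4 - 4*((q:ℝ)+1)^3*(((q+ν:ℕ):ℝ)+1)
            + 6*((q:ℝ)+1)^2*(((q+ν:ℕ):ℝ)+1)*(((q+ν:ℕ):ℝ)+2)
            - 4*((q:ℝ)+1)*(((q+ν:ℕ):ℝ)+1)*(((q+ν:ℕ):ℝ)+2)*(((q+ν:ℕ):ℝ)+3)
            + (((q+ν:ℕ):ℝ)+1)*(((q+ν:ℕ):ℝ)+2)*(((q+ν:ℕ):ℝ)+3)*(((q+ν:ℕ):ℝ)+4)) := by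
          ring
      _ = (((x/((q:ℝ)+1))^(q+1) * (x^4/((q:ℝ)+1)^4)) * ((β*x)^ν/(ν.factorial : ℝ))) *
          (((q:ℝ)+1)^4 - 4*((q:ℝ)+1)^3*(((q+ν:ℕ):ℝ)+1)
            + 6*((q:ℝ)+1)^2*(((q+ν:ℕ):ℝ)+1)*(((q+ν:ℕ):ℝ)+2)
            - 4*((q:ℝ)+1)*(((q+ν:ℕ):ℝ)+1)*(((q+ν:ℕ):ℝ)+2)*(((q+ν:ℕ):ℝ)+3)
            + (((q+ν:ℕ):ℝ)+1)*(((q+ν:ℕ):ℝ)+2)*(((q+ν:ℕ):ℝ)+3)*(((q+ν:ℕ):ℝ)+4)) := by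
          rw [hsc]
      _ = _ := by
          simp only [Finset.prod_range_succ, Finset.prod_range_zero, one_mul]
          push_cast
          ring
  simp only [PW]
  rw [tsum_congr key, H.tsum_eq]
  rw [Real.exp_neg]
  have hexpne : Real.exp (β * x) ≠ 0 := Real.exp_ne_zero _
  have hxq : x ^ (q+1) ≠ 0 := pow_ne_zero _ hx0
  have hNq : ((q:ℝ)+1) ^ (q+1) ≠ 0 := pow_ne_zero _ hN0
  push_cast
  rw [div_pow, div_pow]
  field_simp
  ring
end

section
/- Let n be a positive integer, β ≥ 0, x > 0, and r ≥ 0 an integer. Then the r-th moment of the semi-exponential Post–Widder operator admits the expansion (P_n^β e_r)(x) = Σ_{k=0}^{r} n^{-k} Σ_{j=0}^{k} (β^j/j!) x^{r+j} Σ_{i=0}^{k-j} C(j+i-1, i) · r!/(r-j-i)! · [r-j-i, r-k], where [·,·] are unsigned Stirling numbers of the first kind. -/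
open MeasureTheory

noncomputable def stirling1 (r ℓ : ℕ) : ℕ := (ascPochhammer ℕ r).coeff ℓ

section Helpers

open Finset Polynomial

-- L1: shift lemma
lemma asc_shift' (s : ℕ) (y : ℝ) :
    (ascPochhammer ℝ s).eval (y + 1) =
      (ascPochhammer ℝ s).eval y + s * (ascPochhammer ℝ (s - 1)).eval (y + 1) := by
  cases s with
  | zero => simp
  | succ t =>
    have h := congrArg (Polynomial.eval y) (ascPochhammer_succ_comp_X_add_one (S := ℝ) t)
    simp only [Polynomial.eval_comp, Polynomial.eval_add, Polynomial.eval_X, Polynomial.eval_one,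
      Polynomial.eval_smul, nsmul_eq_mul, Polynomial.eval_mul, Polynomial.eval_natCast] at h
    rw [h]
    push_cast
    ring

-- L2: Newton expansion in ν
lemma asc_newton (m : ℕ) : ∀ (ν : ℕ) (y : ℝ),
    (ascPochhammer ℝ m).eval (y + ν) =
      ∑ i ∈ Finset.range (m + 1), (ν.choose i : ℝ) * (m.descFactorial i : ℝ) *
        (ascPochhammer ℝ (m - i)).eval (y + i) := by
  intro ν
  induction ν with
  | zero =>
    intro y
    rw [Finset.sum_eq_single 0]
    · simp
    · intro i _ hi
      rcases Nat.exists_eq_succ_of_ne_zero hi with ⟨t, rfl⟩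
      simp
    · simp
  | succ ν ih =>
    intro y
    have h0 : y + ((ν + 1 : ℕ) : ℝ) = (y + 1) + (ν : ℝ) := by push_cast; ring
    rw [h0, ih (y + 1)]
    have hterm : ∀ i ∈ Finset.range (m + 1),
        (ν.choose i : ℝ) * (m.descFactorial i : ℝ) *
          (ascPochhammer ℝ (m - i)).eval (y + 1 + (i : ℝ))
        = (ν.choose i : ℝ) * (m.descFactorial i : ℝ) *
            (ascPochhammer ℝ (m - i)).eval (y + (i : ℝ))
          + (ν.choose i : ℝ) * (m.descFactorial (i + 1) : ℝ) *
            (ascPochhammer ℝ (m - (i + 1))).eval (y + ((i : ℝ) + 1)) := by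
      intro i _
      have h1 := asc_shift' (m - i) (y + (i : ℝ))
      rw [show y + 1 + (i : ℝ) = y + (i : ℝ) + 1 by ring, h1]
      have hd : (m.descFactorial (i + 1) : ℝ) = ((m - i : ℕ) : ℝ) * m.descFactorial i := by
        rw [Nat.descFactorial_succ]; push_cast; ring
      rw [hd, show m - i - 1 = m - (i + 1) by omega]
      ring
    rw [Finset.sum_congr rfl hterm, Finset.sum_add_distrib]
    rw [Finset.sum_range_succ (fun i => (ν.choose i : ℝ) * (m.descFactorial (i + 1) : ℝ) *
      (ascPochhammer ℝ (m - (i + 1))).eval (y + ((i : ℝ) + 1)))]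
    have hlast : ((ν.choose m : ℝ)) * (m.descFactorial (m + 1) : ℝ) *
        (ascPochhammer ℝ (m - (m + 1))).eval (y + ((m : ℝ) + 1)) = 0 := by
      rw [Nat.descFactorial_eq_zero_iff_lt.2 (Nat.lt_succ_self m)]
      simp
    rw [hlast, add_zero]
    rw [Finset.sum_range_succ' (fun i => (ν.choose i : ℝ) * (m.descFactorial i : ℝ) *
      (ascPochhammer ℝ (m - i)).eval (y + (i : ℝ)))]
    rw [Finset.sum_range_succ' (fun i => ((ν + 1).choose i : ℝ) * (m.descFactorial i : ℝ) *
      (ascPochhammer ℝ (m - i)).eval (y + (i : ℝ)))]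
    simp only [Nat.choose_zero_right, Nat.cast_one]
    rw [add_right_comm, ← Finset.sum_add_distrib]
    congr 1
    refine Finset.sum_congr rfl fun i _ => ?_
    have hc : ((ν + 1).choose (i + 1) : ℝ) = (ν.choose i : ℝ) + (ν.choose (i + 1) : ℝ) := by
      rw [Nat.choose_succ_succ]; push_cast; ring
    rw [hc]
    push_cast
    ring


lemma dF_succ_succ (m i : ℕ) :
    (m + 1).descFactorial (i + 1) = m.descFactorial (i + 1) + (i + 1) * m.descFactorial i := by
  rw [Nat.succ_descFactorial_succ, Nat.descFactorial_succ]
  rcases le_or_gt i m with h | h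
  · rw [← Nat.add_mul]
    congr 1
    omega
  · rw [Nat.descFactorial_eq_zero_iff_lt.2 h]
    simp

lemma asc_shift_nat (J : ℕ) : ∀ (m : ℕ) (y : ℝ),
    (ascPochhammer ℝ m).eval (y + ((J : ℝ) + 1)) =
      ∑ i ∈ Finset.range (m + 1), ((J + i).choose i : ℝ) * (m.descFactorial i : ℝ) *
        (ascPochhammer ℝ (m - i)).eval y := by
  intro m
  induction m with
  | zero => intro y; simp
  | succ m ih =>
    intro y
    rw [ascPochhammer_succ_eval, ih y]
    rw [Finset.sum_mul]
    have hterm : ∀ i ∈ Finset.range (m + 1),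
        ((J + i).choose i : ℝ) * (m.descFactorial i : ℝ) *
            (ascPochhammer ℝ (m - i)).eval y * (y + ((J : ℝ) + 1) + (m : ℝ))
        = ((J + i).choose i : ℝ) * (m.descFactorial i : ℝ) *
            (ascPochhammer ℝ (m + 1 - i)).eval y
          + ((J + i + 1).choose (i + 1) : ℝ) * (((i : ℝ) + 1) * (m.descFactorial i : ℝ)) *
            (ascPochhammer ℝ (m - i)).eval y := by
      intro i hi
      rw [Finset.mem_range] at hi
      have hi' : i ≤ m := by omega
      have hsucc : (ascPochhammer ℝ (m + 1 - i)).eval y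
          = (ascPochhammer ℝ (m - i)).eval y * (y + ((m - i : ℕ) : ℝ)) := by
        rw [show m + 1 - i = (m - i) + 1 by omega, ascPochhammer_succ_eval]
      have hcast : ((m - i : ℕ) : ℝ) = (m : ℝ) - (i : ℝ) := by
        rw [Nat.cast_sub hi']
      have hch : ((J + i + 1).choose (i + 1) : ℝ) * ((i : ℝ) + 1)
          = ((J : ℝ) + (i : ℝ) + 1) * ((J + i).choose i : ℝ) := by
        have := Nat.add_one_mul_choose_eq (J + i) i
        have h2 : ((J + i + 1) * (J + i).choose i : ℕ) = ((J + i + 1).choose (i + 1) * (i + 1) : ℕ) := by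
          simpa [Nat.succ_eq_add_one] using this
        have h3 := congrArg (fun z : ℕ => (z : ℝ)) h2
        push_cast at h3
        linarith
      rw [hsucc, hcast]
      linear_combination -((m.descFactorial i : ℝ) * (ascPochhammer ℝ (m - i)).eval y) * hch
    rw [Finset.sum_congr rfl hterm, Finset.sum_add_distrib]
    -- extend first sum to range (m+2): extra term is zero
    have hz : ((J + (m + 1)).choose (m + 1) : ℝ) * (m.descFactorial (m + 1) : ℝ) *
        (ascPochhammer ℝ (m + 1 - (m + 1))).eval y = 0 := by
      rw [Nat.descFactorial_eq_zero_iff_lt.2 (Nat.lt_succ_self m)]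
      simp
    have hext : ∑ i ∈ Finset.range (m + 1), ((J + i).choose i : ℝ) * (m.descFactorial i : ℝ) *
          (ascPochhammer ℝ (m + 1 - i)).eval y
        = ∑ i ∈ Finset.range (m + 2), ((J + i).choose i : ℝ) * (m.descFactorial i : ℝ) *
          (ascPochhammer ℝ (m + 1 - i)).eval y := by
      rw [Finset.sum_range_succ _ (m + 1), hz, add_zero]
    rw [hext]
    rw [Finset.sum_range_succ' (fun i => ((J + i).choose i : ℝ) * (m.descFactorial i : ℝ) *
      (ascPochhammer ℝ (m + 1 - i)).eval y) (m + 1)]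
    rw [Finset.sum_range_succ' (fun i => ((J + i).choose i : ℝ) * ((m + 1).descFactorial i : ℝ) *
      (ascPochhammer ℝ (m + 1 - i)).eval y) (m + 1)]
    rw [add_right_comm, ← Finset.sum_add_distrib]
    simp only [Nat.add_zero, Nat.choose_zero_right, Nat.cast_one, Nat.descFactorial_zero]
    congr 1
    refine Finset.sum_congr rfl fun i _ => ?_
    have hdf : (((m + 1).descFactorial (i + 1) : ℕ) : ℝ)
        = (m.descFactorial (i + 1) : ℝ) + ((i : ℝ) + 1) * (m.descFactorial i : ℝ) := by
      rw [dF_succ_succ]; push_cast; ring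
    rw [show m + 1 - (i + 1) = m - i by omega, hdf]
    ring


-- combined shift by j (including j = 0 with truncated choose)
lemma ascA (j m : ℕ) (y : ℝ)
    (H : ∀ (J m : ℕ) (y : ℝ), (ascPochhammer ℝ m).eval (y + ((J : ℝ) + 1)) =
      ∑ i ∈ Finset.range (m + 1), ((J + i).choose i : ℝ) * (m.descFactorial i : ℝ) *
        (ascPochhammer ℝ (m - i)).eval y) :
    (ascPochhammer ℝ m).eval (y + (j : ℝ)) =
      ∑ i ∈ Finset.range (m + 1), ((j + i - 1).choose i : ℝ) * (m.descFactorial i : ℝ) *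
        (ascPochhammer ℝ (m - i)).eval y := by
  cases j with
  | zero =>
    rw [Nat.cast_zero, add_zero, Finset.sum_eq_single 0]
    · simp
    · intro i _ hi
      rcases Nat.exists_eq_succ_of_ne_zero hi with ⟨t, rfl⟩
      rw [show 0 + (t + 1) - 1 = t by omega, Nat.choose_eq_zero_of_lt (Nat.lt_succ_self t)]
      simp
    · simp
  | succ J =>
    have := H J m y
    rw [show ((J + 1 : ℕ) : ℝ) = (J : ℝ) + 1 by push_cast; ring, this]
    refine Finset.sum_congr rfl fun i _ => ?_
    rw [show J + 1 + i - 1 = J + i by omega]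

-- stirling1 vanishing
lemma stirling1_eq_zero {s ℓ : ℕ} (h : s < ℓ) : stirling1 s ℓ = 0 := by
  unfold stirling1
  apply Polynomial.coeff_eq_zero_of_natDegree_lt
  rwa [ascPochhammer_natDegree]

-- eval as sum of coefficients
lemma asc_eval_sum (s : ℕ) (y : ℝ) :
    (ascPochhammer ℝ s).eval y =
      ∑ ℓ ∈ Finset.range (s + 1), (stirling1 s ℓ : ℝ) * y ^ ℓ := by
  have hmap : (ascPochhammer ℕ s).map (Nat.castRingHom ℝ) = ascPochhammer ℝ s :=
    ascPochhammer_map (Nat.castRingHom ℝ) s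
  have hdeg : (ascPochhammer ℝ s).natDegree < s + 1 := by
    rw [ascPochhammer_natDegree]; omega
  rw [Polynomial.eval_eq_sum_range' hdeg]
  refine Finset.sum_congr rfl fun ℓ _ => ?_
  congr 1
  rw [← hmap, Polynomial.coeff_map]
  simp [stirling1]

-- cast of ascFactorial to real ascPochhammer
lemma ascFactorial_cast (a r : ℕ) :
    ((a.ascFactorial r : ℕ) : ℝ) = (ascPochhammer ℝ r).eval (a : ℝ) := by
  rw [← ascPochhammer_nat_eq_ascFactorial]
  exact_mod_cast ascPochhammer_eval_cast (S := ℝ) r a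

-- real factorial ratio
lemma dF_cast (a b : ℕ) (h : b ≤ a) :
    ((a.descFactorial b : ℕ) : ℝ) = (a.factorial : ℝ) / ((a - b).factorial : ℝ) := by
  rw [eq_div_iff (by exact_mod_cast (a - b).factorial_ne_zero)]
  exact_mod_cast congrArg (fun z : ℕ => (z : ℝ))
    ((mul_comm _ _).trans (Nat.factorial_mul_descFactorial h))


-- series:  ∑' ν, z^ν * C(ν,i)/ν!  = z^i/i! * exp z,  and summable
lemma choose_summand_eq (i : ℕ) (z : ℝ) (s : ℕ) :
    z ^ (i + s) * ((i + s).choose i : ℝ) / ((i + s).factorial : ℝ)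
      = (z ^ i / (i.factorial : ℝ)) * (z ^ s / (s.factorial : ℝ)) := by
  have hkey : ((i + s).choose i : ℝ) * (i.factorial : ℝ) * (s.factorial : ℝ)
      = ((i + s).factorial : ℝ) := by
    exact_mod_cast congrArg (fun z : ℕ => (z : ℝ))
      (by simpa using Nat.choose_mul_factorial_mul_factorial (Nat.le_add_right i s))
  have h1 : ((i + s).factorial : ℝ) ≠ 0 := by exact_mod_cast (i + s).factorial_ne_zero
  have h2 : (i.factorial : ℝ) ≠ 0 := by exact_mod_cast i.factorial_ne_zero
  have h3 : (s.factorial : ℝ) ≠ 0 := by exact_mod_cast s.factorial_ne_zero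
  field_simp
  rw [pow_add]
  linear_combination (z ^ i * z ^ s) * hkey

lemma choose_support (i : ℕ) (z : ℝ) :
    Function.support (fun ν : ℕ => z ^ ν * (ν.choose i : ℝ) / (ν.factorial : ℝ))
      ⊆ Set.range (fun s : ℕ => i + s) := by
  intro ν hν
  by_contra hr
  apply hν
  have : ν < i := by
    by_contra hle
    exact hr ⟨ν - i, by show i + (ν - i) = ν; omega⟩
  simp [Nat.choose_eq_zero_of_lt this]

lemma summable_choose (i : ℕ) (z : ℝ) :
    Summable (fun ν : ℕ => z ^ ν * (ν.choose i : ℝ) / (ν.factorial : ℝ)) := by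
  have hinj : Function.Injective (fun s : ℕ => i + s) := fun a b h => Nat.add_left_cancel h
  rw [← hinj.summable_iff (fun ν hν => by
    by_contra h0
    exact hν (choose_support i z (by simpa [Function.mem_support] using h0)))]
  have : (fun s : ℕ => z ^ (i + s) * ((i + s).choose i : ℝ) / ((i + s).factorial : ℝ))
      = fun s : ℕ => (z ^ i / (i.factorial : ℝ)) * (z ^ s / (s.factorial : ℝ)) :=
    funext (choose_summand_eq i z)
  show Summable ((fun ν : ℕ => z ^ ν * (ν.choose i : ℝ) / (ν.factorial : ℝ)) ∘ (fun s => i + s))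
  simp only [Function.comp_def]
  rw [this]
  exact (Real.summable_pow_div_factorial z).mul_left _

lemma tsum_choose (i : ℕ) (z : ℝ) :
    ∑' ν : ℕ, z ^ ν * (ν.choose i : ℝ) / (ν.factorial : ℝ)
      = z ^ i / (i.factorial : ℝ) * Real.exp z := by
  have hinj : Function.Injective (fun s : ℕ => i + s) := fun a b h => Nat.add_left_cancel h
  rw [← hinj.tsum_eq (choose_support i z)]
  have : (fun s : ℕ => z ^ (i + s) * ((i + s).choose i : ℝ) / ((i + s).factorial : ℝ))
      = fun s : ℕ => (z ^ i / (i.factorial : ℝ)) * (z ^ s / (s.factorial : ℝ)) :=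
    funext (choose_summand_eq i z)
  show (∑' s : ℕ, z ^ (i + s) * ((i + s).choose i : ℝ) / ((i + s).factorial : ℝ)) = _
  rw [this, tsum_mul_left]
  congr 1
  rw [Real.exp_eq_exp_ℝ, NormedSpace.exp_eq_tsum_div]

-- the Gamma integral with natural power
lemma int_pow (m : ℕ) {c : ℝ} (hc : 0 < c) :
    ∫ t in Set.Ioi (0 : ℝ), t ^ m * Real.exp (-(c * t))
      = (1 / c) ^ (m + 1) * (m.factorial : ℝ) := by
  have ha : (0 : ℝ) < (m : ℝ) + 1 := by positivity
  have h := Real.integral_rpow_mul_exp_neg_mul_Ioi ha hc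
  rw [show ((m : ℝ) + 1) - 1 = (m : ℝ) by ring] at h
  simp_rw [Real.rpow_natCast] at h
  rw [h, Real.Gamma_nat_eq_factorial,
    show ((m : ℝ) + 1) = ((m + 1 : ℕ) : ℝ) by push_cast; ring, Real.rpow_natCast]


lemma PW_eval (n : ℕ) (hn : 1 ≤ n) (β x : ℝ) (hx : 0 < x) (r : ℕ) :
    PW n β x (fun t => t ^ r)
      = (x / (n : ℝ)) ^ r * ∑ i ∈ Finset.range (r + 1),
          (r.descFactorial i : ℝ) * (ascPochhammer ℝ (r - i)).eval ((n : ℝ) + i) *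
            ((β * x) ^ i / (i.factorial : ℝ)) := by
  have hN : (0 : ℝ) < (n : ℝ) := by exact_mod_cast hn
  have hN0 : ((n : ℝ)) ≠ 0 := ne_of_gt hN
  have hx0 : x ≠ 0 := ne_of_gt hx
  simp only [PW]
  have hterm : ∀ ν : ℕ,
      ((n : ℝ) * β) ^ ν / (ν.factorial * Real.Gamma ((n : ℝ) + ν)) *
        ∫ t in Set.Ioi (0 : ℝ), t ^ (n + ν - 1) * Real.exp (-((n : ℝ) * t) / x) * t ^ r
      = (x / (n : ℝ)) ^ (n + r) *
          ((β * x) ^ ν * (((n + ν).ascFactorial r : ℕ) : ℝ) / (ν.factorial : ℝ)) := by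
    intro ν
    have h1 : ∀ t : ℝ, t ^ (n + ν - 1) * Real.exp (-((n : ℝ) * t) / x) * t ^ r
        = t ^ (n + ν - 1 + r) * Real.exp (-(((n : ℝ) / x) * t)) := by
      intro t
      rw [show -((n : ℝ) * t) / x = -(((n : ℝ) / x) * t) by ring, pow_add]
      ring
    have hint : (∫ t in Set.Ioi (0 : ℝ), t ^ (n + ν - 1) * Real.exp (-((n : ℝ) * t) / x) * t ^ r)
        = (x / (n : ℝ)) ^ (n + ν + r) * (((n + ν + r - 1).factorial : ℕ) : ℝ) := by
      simp only [h1]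
      rw [int_pow (n + ν - 1 + r) (div_pos hN hx)]
      rw [one_div_div, show n + ν - 1 + r + 1 = n + ν + r by omega,
        show n + ν - 1 + r = n + ν + r - 1 by omega]
    have hΓ : Real.Gamma ((n : ℝ) + ν) = (((n + ν - 1).factorial : ℕ) : ℝ) := by
      rw [show (n : ℝ) + (ν : ℝ) = ((n + ν - 1 : ℕ) : ℝ) + 1 by
        rw [Nat.cast_sub (by omega)]; push_cast; ring]
      exact Real.Gamma_nat_eq_factorial _
    have hfac : (((n + ν + r - 1).factorial : ℕ) : ℝ)
        = (((n + ν - 1).factorial : ℕ) : ℝ) * (((n + ν).ascFactorial r : ℕ) : ℝ) := by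
      exact_mod_cast congrArg (fun z : ℕ => (z : ℝ))
        (Nat.factorial_mul_ascFactorial' (n + ν) r (by omega)).symm
    rw [hint, hΓ, hfac]
    have hf1 : (((n + ν - 1).factorial : ℕ) : ℝ) ≠ 0 := by
      exact_mod_cast (n + ν - 1).factorial_ne_zero
    have hf2 : ((ν.factorial : ℕ) : ℝ) ≠ 0 := by exact_mod_cast ν.factorial_ne_zero
    have hpow : ((n : ℝ) * β) ^ ν * (x / (n : ℝ)) ^ (n + ν + r)
        = (x / (n : ℝ)) ^ (n + r) * (β * x) ^ ν := by
      rw [show n + ν + r = (n + r) + ν by omega, pow_add, ← mul_assoc,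
        mul_comm (((n : ℝ) * β) ^ ν), mul_assoc, ← mul_pow]
      congr 2
      field_simp
    have halg : ∀ P Q F V A : ℝ, F ≠ 0 → V ≠ 0 →
        P / (V * F) * (Q * (F * A)) = (P * Q) * (A / V) := by
      intro P Q F V A hF hV
      field_simp
    rw [halg _ _ _ _ _ hf1 hf2, hpow]
    ring
  rw [tsum_congr hterm, tsum_mul_left]
  have hA : ∀ ν : ℕ, (β * x) ^ ν * (((n + ν).ascFactorial r : ℕ) : ℝ) / (ν.factorial : ℝ)
      = ∑ i ∈ Finset.range (r + 1),
          ((r.descFactorial i : ℝ) * (ascPochhammer ℝ (r - i)).eval ((n : ℝ) + i)) *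
            ((β * x) ^ ν * (ν.choose i : ℝ) / (ν.factorial : ℝ)) := by
    intro ν
    rw [ascFactorial_cast, show (((n + ν : ℕ)) : ℝ) = (n : ℝ) + (ν : ℝ) by push_cast; ring,
      asc_newton r ν ((n : ℝ)), Finset.mul_sum, Finset.sum_div]
    exact Finset.sum_congr rfl fun i _ => by ring
  rw [tsum_congr hA, Summable.tsum_finsetSum (fun i _ => (summable_choose i (β * x)).mul_left _)]
  have : ∀ i ∈ Finset.range (r + 1),
      (∑' ν : ℕ, ((r.descFactorial i : ℝ) * (ascPochhammer ℝ (r - i)).eval ((n : ℝ) + i)) *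
        ((β * x) ^ ν * (ν.choose i : ℝ) / (ν.factorial : ℝ)))
      = ((r.descFactorial i : ℝ) * (ascPochhammer ℝ (r - i)).eval ((n : ℝ) + i)) *
          ((β * x) ^ i / (i.factorial : ℝ) * Real.exp (β * x)) := by
    intro i _
    rw [tsum_mul_left, tsum_choose]
  rw [Finset.sum_congr rfl this]
  have hE : ∑ i ∈ Finset.range (r + 1),
      ((r.descFactorial i : ℝ) * (ascPochhammer ℝ (r - i)).eval ((n : ℝ) + i)) *
        ((β * x) ^ i / (i.factorial : ℝ) * Real.exp (β * x))
      = Real.exp (β * x) * ∑ i ∈ Finset.range (r + 1),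
          (r.descFactorial i : ℝ) * (ascPochhammer ℝ (r - i)).eval ((n : ℝ) + i) *
            ((β * x) ^ i / (i.factorial : ℝ)) := by
    rw [Finset.mul_sum]
    exact Finset.sum_congr rfl fun i _ => by ring
  rw [hE]
  have hee : Real.exp (-(β * x)) * Real.exp (β * x) = 1 := by
    rw [← Real.exp_add]; simp
  have hpp : ((n : ℝ) / x) ^ n * (x / (n : ℝ)) ^ (n + r) = (x / (n : ℝ)) ^ r := by
    rw [pow_add, ← mul_assoc, ← mul_pow, show ((n : ℝ) / x) * (x / (n : ℝ)) = 1 by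
      field_simp, one_pow, one_mul]
  set S := ∑ i ∈ Finset.range (r + 1),
      (r.descFactorial i : ℝ) * (ascPochhammer ℝ (r - i)).eval ((n : ℝ) + i) *
        ((β * x) ^ i / (i.factorial : ℝ)) with hS
  linear_combination (S * (((n : ℝ) / x) ^ n * (x / (n : ℝ)) ^ (n + r))) * hee + S * hpp


lemma stepC (n : ℕ) (hn : 1 ≤ n) (β x : ℝ) (hx : 0 < x) (r : ℕ) :
    ∑ k ∈ Finset.range (r + 1), ((n : ℝ))⁻¹ ^ k *
        ∑ j ∈ Finset.range (k + 1), β ^ j / j.factorial * x ^ (r + j) *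
          ∑ i ∈ Finset.range (k - j + 1),
            ((j + i - 1).choose i : ℝ) * ((r.factorial : ℝ) / ((r - j - i).factorial : ℝ)) *
              (stirling1 (r - j - i) (r - k) : ℝ)
      = (x / (n : ℝ)) ^ r * ∑ j ∈ Finset.range (r + 1),
          (r.descFactorial j : ℝ) * (ascPochhammer ℝ (r - j)).eval ((n : ℝ) + j) *
            ((β * x) ^ j / (j.factorial : ℝ)) := by
  have hN : (0 : ℝ) < (n : ℝ) := by exact_mod_cast hn
  have hN0 : ((n : ℝ)) ≠ 0 := ne_of_gt hN
  have hx0 : x ≠ 0 := ne_of_gt hx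
  -- distribute and swap the (k, j) double sum
  have h1 : ∀ k ∈ Finset.range (r + 1), ((n : ℝ))⁻¹ ^ k *
        ∑ j ∈ Finset.range (k + 1), β ^ j / j.factorial * x ^ (r + j) *
          ∑ i ∈ Finset.range (k - j + 1),
            ((j + i - 1).choose i : ℝ) * ((r.factorial : ℝ) / ((r - j - i).factorial : ℝ)) *
              (stirling1 (r - j - i) (r - k) : ℝ)
      = ∑ j ∈ Finset.range (k + 1), ((n : ℝ))⁻¹ ^ k *
          (β ^ j / j.factorial * x ^ (r + j) *
          ∑ i ∈ Finset.range (k - j + 1),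
            ((j + i - 1).choose i : ℝ) * ((r.factorial : ℝ) / ((r - j - i).factorial : ℝ)) *
              (stirling1 (r - j - i) (r - k) : ℝ)) :=
    fun k _ => Finset.mul_sum _ _ _
  rw [Finset.sum_congr rfl h1]
  rw [Finset.sum_comm' (s := Finset.range (r + 1)) (t := fun k => Finset.range (k + 1))
    (t' := Finset.range (r + 1)) (s' := fun j => Finset.Icc j r)
    (by intro k j; simp only [Finset.mem_range, Finset.mem_Icc]; omega)]
  rw [Finset.mul_sum]
  refine Finset.sum_congr rfl fun j hj => ?_
  rw [Finset.mem_range] at hj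
  have hjr : j ≤ r := by omega
  -- reindex k = r - ℓ
  have h3 : (∑ k ∈ Finset.Icc j r, ((n : ℝ))⁻¹ ^ k *
        (β ^ j / j.factorial * x ^ (r + j) *
          ∑ i ∈ Finset.range (k - j + 1),
            ((j + i - 1).choose i : ℝ) * ((r.factorial : ℝ) / ((r - j - i).factorial : ℝ)) *
              (stirling1 (r - j - i) (r - k) : ℝ)))
      = ∑ ℓ ∈ Finset.range (r - j + 1), ((n : ℝ))⁻¹ ^ (r - ℓ) *
          (β ^ j / j.factorial * x ^ (r + j) *
          ∑ i ∈ Finset.range ((r - ℓ) - j + 1),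
            ((j + i - 1).choose i : ℝ) * ((r.factorial : ℝ) / ((r - j - i).factorial : ℝ)) *
              (stirling1 (r - j - i) (r - (r - ℓ)) : ℝ)) := by
    refine Finset.sum_nbij' (fun k => r - k) (fun ℓ => r - ℓ) ?_ ?_ ?_ ?_ ?_
    · intro a ha; rw [Finset.mem_Icc] at ha; rw [Finset.mem_range]; omega
    · intro a ha; rw [Finset.mem_range] at ha; rw [Finset.mem_Icc]; omega
    · intro a ha; rw [Finset.mem_Icc] at ha; omega
    · intro a ha; rw [Finset.mem_range] at ha; omega
    · intro k hk
      rw [Finset.mem_Icc] at hk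
      rw [show r - (r - k) = k by omega]
  rw [h3]
  -- extend inner i-sum to range (r - j + 1) and distribute
  have h2 : ∀ ℓ ∈ Finset.range (r - j + 1),
      ((n : ℝ))⁻¹ ^ (r - ℓ) * (β ^ j / j.factorial * x ^ (r + j) *
        ∑ i ∈ Finset.range ((r - ℓ) - j + 1),
          ((j + i - 1).choose i : ℝ) * ((r.factorial : ℝ) / ((r - j - i).factorial : ℝ)) *
            (stirling1 (r - j - i) (r - (r - ℓ)) : ℝ))
      = ∑ i ∈ Finset.range (r - j + 1), ((n : ℝ))⁻¹ ^ (r - ℓ) *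
          (β ^ j / j.factorial * x ^ (r + j) *
          (((j + i - 1).choose i : ℝ) * ((r.factorial : ℝ) / ((r - j - i).factorial : ℝ)) *
            (stirling1 (r - j - i) ℓ : ℝ))) := by
    intro ℓ hℓ
    rw [Finset.mem_range] at hℓ
    rw [show r - (r - ℓ) = ℓ by omega]
    rw [Finset.sum_subset (Finset.range_subset_range.2 (by omega : (r - ℓ) - j + 1 ≤ r - j + 1))
      (by
        intro i hi hni
        rw [Finset.mem_range] at hi
        rw [Finset.mem_range, not_lt] at hni
        rw [stirling1_eq_zero (show r - j - i < ℓ by omega)]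
        simp)]
    rw [Finset.mul_sum, Finset.mul_sum]
  rw [Finset.sum_congr rfl h2]
  rw [Finset.sum_comm]
  -- RHS: expand the Pochhammer evaluations into a double sum
  have hR : (x / (n : ℝ)) ^ r *
        ((r.descFactorial j : ℝ) * (ascPochhammer ℝ (r - j)).eval ((n : ℝ) + j) *
          ((β * x) ^ j / (j.factorial : ℝ)))
      = ∑ i ∈ Finset.range (r - j + 1), ∑ ℓ ∈ Finset.range (r - j + 1),
          (x / (n : ℝ)) ^ r * ((r.descFactorial j : ℝ) *
            (((j + i - 1).choose i : ℝ) * ((r - j).descFactorial i : ℝ) *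
              ((stirling1 (r - j - i) ℓ : ℝ) * ((n : ℝ)) ^ ℓ)) *
            ((β * x) ^ j / (j.factorial : ℝ))) := by
    rw [ascA j (r - j) ((n : ℝ)) asc_shift_nat]
    simp only [Finset.mul_sum, Finset.sum_mul]
    refine Finset.sum_congr rfl fun i hi => ?_
    rw [Finset.mem_range] at hi
    rw [asc_eval_sum (r - j - i) ((n : ℝ))]
    rw [show ∑ ℓ ∈ Finset.range (r - j - i + 1), (stirling1 (r - j - i) ℓ : ℝ) * ((n : ℝ)) ^ ℓ
        = ∑ ℓ ∈ Finset.range (r - j + 1), (stirling1 (r - j - i) ℓ : ℝ) * ((n : ℝ)) ^ ℓ from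
      Finset.sum_subset (Finset.range_subset_range.2 (by omega : r - j - i + 1 ≤ r - j + 1))
        (by
          intro ℓ hℓ hnℓ
          rw [Finset.mem_range] at hℓ
          rw [Finset.mem_range, not_lt] at hnℓ
          rw [stirling1_eq_zero (show r - j - i < ℓ by omega)]
          simp)]
    simp only [Finset.mul_sum, Finset.sum_mul]
    try exact Finset.sum_congr rfl fun ℓ hℓ => by ring
  rw [hR]
  refine Finset.sum_congr rfl fun i hi => ?_
  rw [Finset.mem_range] at hi
  have hir : i ≤ r - j := by omega
  refine Finset.sum_congr rfl fun ℓ hℓ => ?_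
  rw [Finset.mem_range] at hℓ
  -- scalar identity
  have hdd : (r.descFactorial j : ℝ) * ((r - j).descFactorial i : ℝ)
      = (r.factorial : ℝ) / ((r - j - i).factorial : ℝ) := by
    rw [dF_cast r j hjr, dF_cast (r - j) i hir]
    have f1 : ((r - j).factorial : ℝ) ≠ 0 := by exact_mod_cast (r - j).factorial_ne_zero
    have f2 : ((r - j - i).factorial : ℝ) ≠ 0 := by exact_mod_cast (r - j - i).factorial_ne_zero
    field_simp
  have hNp : ((n : ℝ))⁻¹ ^ (r - ℓ) = ((n : ℝ)) ^ ℓ / ((n : ℝ)) ^ r := by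
    have hsplit : ((n : ℝ)) ^ r = ((n : ℝ)) ^ (r - ℓ) * ((n : ℝ)) ^ ℓ := by
      rw [← pow_add]; congr 1; omega
    rw [inv_pow, hsplit, eq_div_iff (mul_ne_zero (pow_ne_zero _ hN0) (pow_ne_zero _ hN0)),
      inv_mul_cancel_left₀ (pow_ne_zero _ hN0)]
  rw [← hdd, hNp, div_pow x ((n : ℝ)) r]
  have f3 : ((n : ℝ)) ^ r ≠ 0 := pow_ne_zero _ hN0
  have f4 : ((j.factorial : ℕ) : ℝ) ≠ 0 := by exact_mod_cast j.factorial_ne_zero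
  field_simp
  rw [pow_add]
  ring

end Helpers

theorem stmt18 (n : ℕ) (hn : 1 ≤ n) (β x : ℝ) (hβ : 0 ≤ β) (hx : 0 < x) (r : ℕ) :
    PW n β x (fun t => t ^ r)
      = ∑ k ∈ Finset.range (r + 1), ((n : ℝ))⁻¹ ^ k *
          ∑ j ∈ Finset.range (k + 1), β ^ j / j.factorial * x ^ (r + j) *
            ∑ i ∈ Finset.range (k - j + 1),
              ((j + i - 1).choose i : ℝ) * ((r.factorial : ℝ) / ((r - j - i).factorial : ℝ)) *
                (stirling1 (r - j - i) (r - k) : ℝ) := by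
  rw [PW_eval n hn β x hx r]
  exact (stepC n hn β x hx r).symm
end
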